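/- arXiv:1708.07187 — 7 statements merged into one kernel-verified Lean document; each statement's English description precedes it below -/
import Mathlib

section
/- Let O ⊂ (0,∞)², O3 ⊂ (0,∞), h : O3 → (0,∞), and suppose G(s,y) := (y + h(y)/s, y·s + h(y)) is a bijection between Q(O) × O3 and O, where Q(O) = {y/x : (x,y) ∈ O}. Then there exists a unique polymer involution T adapted to h on O × O3 (i.e. a map T : O × O3 → O × O3 with T∘T = id whose first two coordinates are T1(r1,r2,y) = y + h(y)·r1/r2 and T2(r1,r2,y) = y·r2/r1 + h(y)), and moreover T = (G⊗id)∘ψ23∘(G⊗id)⁻¹, where ψ23(a,b,c) = (a,c,b). -/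
/-!
Every point of `O × O3` is `(G(s,y), c)` for a unique `(s,y,c) ∈ Q(O) × O3 × O3`, and since
`G(s,y)` has slope `s`, the first two coordinates of an adapted map send `(G(s,y), c)` to
`G(s,c)`. An adapted involution must therefore send `(G(s,y), c)` to `(G(s,c), b)`, and applying
it twice gives `G(s,b) = G(s,y)`, so `b = y` by injectivity of `G`. Conversely, this formula
defines an adapted involution.
-/

/-- A polymer involution adapted to `h` on `D`: an involution of `D` whose first
two coordinates are `(r1,r2,y) ↦ (y + h(y)·r1/r2, y·r2/r1 + h(y))`. -/
def IsPolymerInvolution (h : ℝ → ℝ) (D : Set (ℝ × ℝ × ℝ)) (T : ℝ × ℝ × ℝ → ℝ × ℝ × ℝ) : Prop :=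
  Set.MapsTo T D D ∧
  (∀ p ∈ D, T (T p) = p) ∧
  (∀ p ∈ D, (T p).1 = p.2.2 + h p.2.2 * p.1 / p.2.1) ∧
  (∀ p ∈ D, (T p).2.1 = p.2.2 * p.2.1 / p.1 + h p.2.2)

open Set Function

noncomputable section

def polymerChart (h : ℝ → ℝ) (q : ℝ × ℝ) : ℝ × ℝ :=
  (q.2 + h q.2 / q.1, q.2 * q.1 + h q.2)

def polymerChart3 (h : ℝ → ℝ) (s y c : ℝ) : ℝ × ℝ × ℝ :=
  ((polymerChart h (s, y)).1, (polymerChart h (s, y)).2, c)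

def polymerHead (h : ℝ → ℝ) (p : ℝ × ℝ × ℝ) : ℝ × ℝ :=
  (p.2.2 + h p.2.2 * p.1 / p.2.1, p.2.2 * p.2.1 / p.1 + h p.2.2)

def polymerDomain (O : Set (ℝ × ℝ)) (O3 : Set ℝ) : Set (ℝ × ℝ × ℝ) :=
  {p | (p.1, p.2.1) ∈ O ∧ p.2.2 ∈ O3}

/-- The map `(G ⊗ id) ∘ ψ₂₃ ∘ (G ⊗ id)⁻¹`, with `g` playing the role of `G⁻¹`. -/
def polymerSwap (h : ℝ → ℝ) (g : ℝ × ℝ → ℝ × ℝ) (p : ℝ × ℝ × ℝ) : ℝ × ℝ × ℝ :=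
  polymerChart3 h (g (p.1, p.2.1)).1 p.2.2 (g (p.1, p.2.1)).2

lemma polymerHead_eq (h : ℝ → ℝ) (p : ℝ × ℝ × ℝ) :
    polymerHead h p = polymerChart h (p.2.1 / p.1, p.2.2) := by
  simp only [polymerHead, polymerChart, div_div_eq_mul_div, mul_div_assoc]

lemma polymerChart_snd_eq_mul_fst (h : ℝ → ℝ) {s : ℝ} (hs : s ≠ 0) (y : ℝ) :
    (polymerChart h (s, y)).2 = s * (polymerChart h (s, y)).1 := by
  simp only [polymerChart]
  field_simp

lemma IsPolymerInvolution.head_eq {h : ℝ → ℝ} {D : Set (ℝ × ℝ × ℝ)} {T : ℝ × ℝ × ℝ → ℝ × ℝ × ℝ}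
    (hT : IsPolymerInvolution h D T) {p : ℝ × ℝ × ℝ} (hp : p ∈ D) :
    ((T p).1, (T p).2.1) = polymerHead h p :=
  Prod.ext (hT.2.2.1 p hp) (hT.2.2.2 p hp)

section

variable {O : Set (ℝ × ℝ)} {O3 QO : Set ℝ} {h : ℝ → ℝ}

lemma exists_polymerChart3_eq (hbij : BijOn (polymerChart h) (QO ×ˢ O3) O)
    {p : ℝ × ℝ × ℝ} (hp : p ∈ polymerDomain O O3) :
    ∃ s ∈ QO, ∃ y ∈ O3, ∃ c ∈ O3, polymerChart3 h s y c = p := by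
  obtain ⟨⟨s, y⟩, ⟨hs, hy⟩, hsy⟩ := hbij.surjOn hp.1
  exact ⟨s, hs, y, hy, p.2.2, hp.2, by simp [polymerChart3, hsy]⟩

lemma polymerSwap_polymerChart3 (hbij : BijOn (polymerChart h) (QO ×ˢ O3) O)
    {s y : ℝ} (hs : s ∈ QO) (hy : y ∈ O3) (c : ℝ) :
    polymerSwap h (invFunOn (polymerChart h) (QO ×ˢ O3)) (polymerChart3 h s y c) =
      polymerChart3 h s c y := by
  have hinv : invFunOn (polymerChart h) (QO ×ˢ O3) (polymerChart h (s, y)) = (s, y) :=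
    hbij.invOn_invFunOn.1 ⟨hs, hy⟩
  simp only [polymerSwap, polymerChart3, Prod.mk.eta, hinv]

variable (hO : O ⊆ Ioi 0 ×ˢ Ioi 0) (hQO : QO = {s : ℝ | ∃ p ∈ O, s = p.2 / p.1})
  (hbij : BijOn (polymerChart h) (QO ×ˢ O3) O)
include hO hQO hbij

lemma polymerHead_polymerChart3 {s y : ℝ} (hs : s ∈ QO) (hy : y ∈ O3) (c : ℝ) :
    polymerHead h (polymerChart3 h s y c) = polymerChart h (s, c) := by
  have hs₀ : s ≠ 0 := by
    rw [hQO] at hs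
    obtain ⟨q, hq, rfl⟩ := hs
    exact (div_pos (hO hq).2 (hO hq).1).ne'
  have hfst : (polymerChart h (s, y)).1 ≠ 0 := (hO (hbij.mapsTo ⟨hs, hy⟩)).1.ne'
  rw [polymerHead_eq]
  simp only [polymerChart3, polymerChart_snd_eq_mul_fst h hs₀, mul_div_cancel_right₀ _ hfst]

lemma IsPolymerInvolution.apply_polymerChart3 {T : ℝ × ℝ × ℝ → ℝ × ℝ × ℝ}
    (hT : IsPolymerInvolution h (polymerDomain O O3) T) {s y c : ℝ}
    (hs : s ∈ QO) (hy : y ∈ O3) (hc : c ∈ O3) :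
    T (polymerChart3 h s y c) = polymerChart3 h s c y := by
  have hp : polymerChart3 h s y c ∈ polymerDomain O O3 := ⟨hbij.mapsTo ⟨hs, hy⟩, hc⟩
  set b := (T (polymerChart3 h s y c)).2.2
  have hTp : T (polymerChart3 h s y c) = polymerChart3 h s c b := by
    have := hT.head_eq hp
    rw [polymerHead_polymerChart3 hO hQO hbij hs hy, Prod.ext_iff] at this
    exact Prod.ext this.1 (Prod.ext this.2 rfl)
  have hb : b ∈ O3 := (hT.1 hp).2
  have hby : polymerChart h (s, b) = polymerChart h (s, y) := by
    have := hT.head_eq (hT.1 hp)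
    rw [hT.2.1 _ hp, hTp, polymerHead_polymerChart3 hO hQO hbij hs hc] at this
    exact this.symm
  have := hbij.injOn (show (s, b) ∈ QO ×ˢ O3 from ⟨hs, hb⟩) ⟨hs, hy⟩ hby
  rw [hTp, (Prod.mk.inj this).2]

lemma IsPolymerInvolution.eqOn {T T' : ℝ × ℝ × ℝ → ℝ × ℝ × ℝ}
    (hT : IsPolymerInvolution h (polymerDomain O O3) T)
    (hT' : IsPolymerInvolution h (polymerDomain O O3) T') :
    EqOn T T' (polymerDomain O O3) := by
  rintro _ hp
  obtain ⟨s, hs, y, hy, c, hc, rfl⟩ := exists_polymerChart3_eq hbij hp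
  rw [hT.apply_polymerChart3 hO hQO hbij hs hy hc, hT'.apply_polymerChart3 hO hQO hbij hs hy hc]

lemma isPolymerInvolution_polymerSwap :
    IsPolymerInvolution h (polymerDomain O O3)
      (polymerSwap h (invFunOn (polymerChart h) (QO ×ˢ O3))) := by
  refine ⟨?_, ?_, ?_, ?_⟩ <;> rintro _ hp <;>
    obtain ⟨s, hs, y, hy, c, hc, rfl⟩ := exists_polymerChart3_eq hbij hp
  · rw [polymerSwap_polymerChart3 hbij hs hy]
    exact ⟨hbij.mapsTo ⟨hs, hc⟩, hy⟩
  · rw [polymerSwap_polymerChart3 hbij hs hy, polymerSwap_polymerChart3 hbij hs hc]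
  · rw [polymerSwap_polymerChart3 hbij hs hy]
    exact congrArg Prod.fst (polymerHead_polymerChart3 hO hQO hbij hs hy c).symm
  · rw [polymerSwap_polymerChart3 hbij hs hy]
    exact congrArg Prod.snd (polymerHead_polymerChart3 hO hQO hbij hs hy c).symm

end

end

theorem stmt_1_general
    (O : Set (ℝ × ℝ)) (hO : O ⊆ Set.Ioi (0 : ℝ) ×ˢ Set.Ioi (0 : ℝ))
    (O3 : Set ℝ)
    (h : ℝ → ℝ)
    (QO : Set ℝ) (hQO : QO = {s : ℝ | ∃ p ∈ O, s = p.2 / p.1})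
    (G : ℝ × ℝ → ℝ × ℝ)
    (hG : ∀ s y : ℝ, G (s, y) = (y + h y / s, y * s + h y))
    (hbij : Set.BijOn G (QO ×ˢ O3) O) :
    ∃ T : ℝ × ℝ × ℝ → ℝ × ℝ × ℝ,
      IsPolymerInvolution h {p : ℝ × ℝ × ℝ | (p.1, p.2.1) ∈ O ∧ p.2.2 ∈ O3} T ∧
      (∀ T' : ℝ × ℝ × ℝ → ℝ × ℝ × ℝ,
        IsPolymerInvolution h {p : ℝ × ℝ × ℝ | (p.1, p.2.1) ∈ O ∧ p.2.2 ∈ O3} T' →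
        Set.EqOn T' T {p : ℝ × ℝ × ℝ | (p.1, p.2.1) ∈ O ∧ p.2.2 ∈ O3}) ∧
      (∀ s ∈ QO, ∀ y ∈ O3, ∀ c ∈ O3,
        T ((G (s, y)).1, (G (s, y)).2, c) = ((G (s, c)).1, (G (s, c)).2, y)) := by
  obtain rfl : G = polymerChart h := funext fun q => hG q.1 q.2
  have hT := isPolymerInvolution_polymerSwap hO hQO hbij
  exact ⟨_, hT, fun T' hT' => hT'.eqOn hO hQO hbij hT,
    fun s hs y hy c hc => hT.apply_polymerChart3 hO hQO hbij hs hy hc⟩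

/-- if `G(s,y) = (y + h(y)/s, y·s + h(y))` is a bijection from
`Q(O) × O3` onto `O`, then there is a unique polymer involution `T` adapted to `h`
on `O × O3`, and it satisfies `T = (G⊗id) ∘ ψ23 ∘ (G⊗id)⁻¹`, i.e.
`T (G(s,y), c) = (G(s,c), y)`. -/
theorem stmt_1
    (O : Set (ℝ × ℝ)) (hO : O ⊆ Set.Ioi (0 : ℝ) ×ˢ Set.Ioi (0 : ℝ))
    (O3 : Set ℝ) (hO3 : O3 ⊆ Set.Ioi (0 : ℝ))
    (h : ℝ → ℝ) (hh : ∀ y ∈ O3, 0 < h y)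
    (QO : Set ℝ) (hQO : QO = {s : ℝ | ∃ p ∈ O, s = p.2 / p.1})
    (G : ℝ × ℝ → ℝ × ℝ)
    (hG : ∀ s y : ℝ, G (s, y) = (y + h y / s, y * s + h y))
    (hbij : Set.BijOn G (QO ×ˢ O3) O) :
    ∃ T : ℝ × ℝ × ℝ → ℝ × ℝ × ℝ,
      IsPolymerInvolution h {p : ℝ × ℝ × ℝ | (p.1, p.2.1) ∈ O ∧ p.2.2 ∈ O3} T ∧
      (∀ T' : ℝ × ℝ × ℝ → ℝ × ℝ × ℝ,
        IsPolymerInvolution h {p : ℝ × ℝ × ℝ | (p.1, p.2.1) ∈ O ∧ p.2.2 ∈ O3} T' →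
        Set.EqOn T' T {p : ℝ × ℝ × ℝ | (p.1, p.2.1) ∈ O ∧ p.2.2 ∈ O3}) ∧
      (∀ s ∈ QO, ∀ y ∈ O3, ∀ c ∈ O3,
        T ((G (s, y)).1, (G (s, y)).2, c) = ((G (s, c)).1, (G (s, c)).2, y)) :=
  stmt_1_general O hO O3 h QO hQO G hG hbij
end

section
/- Let O ⊂ (0,∞)², O3 ⊂ (0,∞), h : O3 → (0,∞). Suppose (T1,T2)(O × O3) = O where T1(r1,r2,y) = y + h(y)·r1/r2 and T2(r1,r2,y) = y·r2/r1 + h(y), and suppose for every (r1,r2) ∈ O the function y ↦ y·r2/r1 + h(y) is injective on O3. Then G(s,y) := (y + h(y)/s, y·s + h(y)) is a bijection between Q(O) × O3 and O. -/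
/-!
Since `G (r₂ / r₁, y) = T (r₁, r₂, y)`, the map `G` sends `Q(O) × O3` onto `T (O × O3) = O`.
For injectivity, the second coordinate of `G (s, y)` is `s` times the first, which is positive:
equal values force equal slopes `s`, and then equal `y` by injectivity of `y ↦ y s + h y`.
-/

section Field

variable {K : Type*} [Field K]

/-- The map `G` of the statement. -/
def bySlope (h : K → K) (q : K × K) : K × K := (q.2 + h q.2 / q.1, q.2 * q.1 + h q.2)

/-- The map `(T1, T2)` of the statement. -/
def byPoint (h : K → K) (p : K × K × K) : K × K :=
  (p.2.2 + h p.2.2 * p.1 / p.2.1, p.2.2 * p.2.1 / p.1 + h p.2.2)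

theorem bySlope_div (h : K → K) (r₁ r₂ y : K) : bySlope h (r₂ / r₁, y) = byPoint h (r₁, r₂, y) := by
  simp only [bySlope, byPoint, div_div_eq_mul_div, mul_div_assoc]

theorem image_bySlope_eq_image_byPoint (h : K → K) (O : Set (K × K)) (O3 : Set K) :
    bySlope h '' ({s | ∃ p ∈ O, s = p.2 / p.1} ×ˢ O3) =
      byPoint h '' {p | (p.1, p.2.1) ∈ O ∧ p.2.2 ∈ O3} := by
  ext z
  constructor
  · rintro ⟨⟨_, y⟩, ⟨⟨p, hp, rfl⟩, hy⟩, rfl⟩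
    exact ⟨(p.1, p.2, y), ⟨hp, hy⟩, (bySlope_div h _ _ _).symm⟩
  · rintro ⟨⟨r₁, r₂, y⟩, ⟨hr, hy⟩, rfl⟩
    exact ⟨(r₂ / r₁, y), ⟨⟨(r₁, r₂), hr, rfl⟩, hy⟩, bySlope_div h _ _ _⟩

theorem bySlope_snd_eq_mul_fst (h : K → K) {s : K} (hs : s ≠ 0) (y : K) :
    (bySlope h (s, y)).2 = s * (bySlope h (s, y)).1 := by
  simp only [bySlope]
  field_simp

end Field

theorem injOn_bySlope {K : Type*} [Field K] [LinearOrder K] [IsStrictOrderedRing K]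
    {h : K → K} {S O3 : Set K} (hS : S ⊆ Set.Ioi 0) (hO3 : O3 ⊆ Set.Ioi 0)
    (hh : ∀ y ∈ O3, 0 < h y) (hinj : ∀ s ∈ S, Set.InjOn (fun y => y * s + h y) O3) :
    Set.InjOn (bySlope h) (S ×ˢ O3) := by
  rintro ⟨s, y⟩ ⟨hs, hy⟩ ⟨s', y'⟩ ⟨hs', hy'⟩ heq
  have hs_pos : 0 < s := hS hs
  have hs'_pos : 0 < s' := hS hs'
  have hfst_pos : 0 < (bySlope h (s, y)).1 := add_pos (hO3 hy) (div_pos (hh y hy) hs_pos)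
  have hss' : s = s' := by
    refine mul_right_cancel₀ hfst_pos.ne' ?_
    rw [← bySlope_snd_eq_mul_fst h hs_pos.ne', heq, bySlope_snd_eq_mul_fst h hs'_pos.ne']
  subst hss'
  exact Prod.ext rfl (hinj s hs hy hy' (congrArg Prod.snd heq))

/-- if `(T1,T2)` maps `O × O3` onto `O` and for each `(r1,r2) ∈ O`
the map `y ↦ y·r2/r1 + h(y)` is injective on `O3`, then
`G(s,y) = (y + h(y)/s, y·s + h(y))` is a bijection from `Q(O) × O3` onto `O`. -/
theorem stmt_2
    (O : Set (ℝ × ℝ)) (hO : O ⊆ Set.Ioi (0 : ℝ) ×ˢ Set.Ioi (0 : ℝ))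
    (O3 : Set ℝ) (hO3 : O3 ⊆ Set.Ioi (0 : ℝ))
    (h : ℝ → ℝ) (hh : ∀ y ∈ O3, 0 < h y)
    (hsurj : (fun p : ℝ × ℝ × ℝ => (p.2.2 + h p.2.2 * p.1 / p.2.1,
        p.2.2 * p.2.1 / p.1 + h p.2.2)) ''
        {p : ℝ × ℝ × ℝ | (p.1, p.2.1) ∈ O ∧ p.2.2 ∈ O3} = O)
    (hinj : ∀ p ∈ O, Set.InjOn (fun y => y * p.2 / p.1 + h y) O3) :
    Set.BijOn (fun q : ℝ × ℝ => (q.2 + h q.2 / q.1, q.2 * q.1 + h q.2))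
      ({s : ℝ | ∃ p ∈ O, s = p.2 / p.1} ×ˢ O3) O := by
  have hslopes_pos : {s : ℝ | ∃ p ∈ O, s = p.2 / p.1} ⊆ Set.Ioi 0 := by
    rintro _ ⟨p, hp, rfl⟩
    exact div_pos (hO hp).2.out (hO hp).1.out
  have hslope_inj : ∀ s ∈ {s : ℝ | ∃ p ∈ O, s = p.2 / p.1},
      Set.InjOn (fun y => y * s + h y) O3 := by
    rintro _ ⟨p, hp, rfl⟩
    simpa only [mul_div_assoc] using hinj p hp
  have himage : bySlope h '' ({s : ℝ | ∃ p ∈ O, s = p.2 / p.1} ×ˢ O3) = O :=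
    (image_bySlope_eq_image_byPoint h O O3).trans hsurj
  have hbij := (injOn_bySlope hslopes_pos hO3 hh hslope_inj).bijOn_image
  rwa [himage] at hbij
end

section
/- Let a, b be real numbers with max(a,b) > 0 and suppose r1, r2, y > 0 satisfy r2 + b·r1 ≠ 0, r2 - a and r2/r1 + b have the same sign (or are both zero), and a + b·y > 0. Define T^{(a,b)}(r1,r2,y) := (y + (a+by)·r1/r2, y·r2/r1 + (a+by), r1·(r2-a)/(r2+b·r1)). Then T^{(a,b)} is an involution on each of the sets D⁺ = {(r1,r2,y) : r1,r2,y > 0, a+b·r1 > 0, r2 - a > 0, a+b·y > 0} and D⁻ = {(r1,r2,y) : r1,r2,y > 0, a+b·r1 < 0, r2 - a < 0, a+b·y > 0}, whenever these sets are nonempty. -/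
/-! Write `s = a + b y`, `D = r2 + b r1` and `(r1', r2', y') = T (r1, r2, y)`. Then
`a + b r1' = s D / r2`, `r2' - a = y D / r1` and `a + b y' = r2 (a + b r1) / D`. On `D⁺` (resp. `D⁻`)
`D = (r2 - a) + (a + b r1)` is positive (resp. negative), so these identities show that `T`
preserves the sign conditions defining the set. `T ∘ T = id` is a rational identity, valid as soon
as `D` and `y r2 + s r1` are nonzero. -/

/-- The map `T^{(a,b)}`. -/
noncomputable def Tab (a b : ℝ) (p : ℝ × ℝ × ℝ) : ℝ × ℝ × ℝ :=
  (p.2.2 + (a + b * p.2.2) * p.1 / p.2.1,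
   p.2.2 * p.2.1 / p.1 + (a + b * p.2.2),
   p.1 * (p.2.1 - a) / (p.2.1 + b * p.1))

section Tab

variable {a b r1 r2 y : ℝ}

lemma add_mul_Tab_fst (hr2 : r2 ≠ 0) :
    a + b * (Tab a b (r1, r2, y)).1 = (a + b * y) * (r2 + b * r1) / r2 := by
  simp only [Tab]
  field_simp
  ring

lemma Tab_snd_fst_sub (hr1 : r1 ≠ 0) :
    (Tab a b (r1, r2, y)).2.1 - a = y * (r2 + b * r1) / r1 := by
  simp only [Tab]
  field_simp
  ring

lemma add_mul_Tab_snd_snd (hD : r2 + b * r1 ≠ 0) :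
    a + b * (Tab a b (r1, r2, y)).2.2 = r2 * (a + b * r1) / (r2 + b * r1) := by
  simp only [Tab]
  field_simp
  ring

lemma Tab_fst_pos (hr1 : 0 < r1) (hr2 : 0 < r2) (hy : 0 < y) (hs : 0 < a + b * y) :
    0 < (Tab a b (r1, r2, y)).1 := by
  simp only [Tab]
  positivity

lemma Tab_snd_fst_pos (hr1 : 0 < r1) (hr2 : 0 < r2) (hy : 0 < y) (hs : 0 < a + b * y) :
    0 < (Tab a b (r1, r2, y)).2.1 := by
  simp only [Tab]
  positivity

lemma Tab_Tab (hr1 : r1 ≠ 0) (hr2 : r2 ≠ 0) (hD : r2 + b * r1 ≠ 0)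
    (hN : y * r2 + (a + b * y) * r1 ≠ 0) :
    Tab a b (Tab a b (r1, r2, y)) = (r1, r2, y) := by
  have hT : Tab a b (r1, r2, y) = ((y * r2 + (a + b * y) * r1) / r2,
      (y * r2 + (a + b * y) * r1) / r1, r1 * (r2 - a) / (r2 + b * r1)) := by
    simp only [Tab, Prod.mk.injEq, and_true]
    constructor <;> field_simp
  rw [hT]
  set N := y * r2 + (a + b * y) * r1 with hN_def
  set D := r2 + b * r1 with hD_def
  have hsum : N / r1 + b * (N / r2) = D * N / (r1 * r2) := by
    field_simp
    ring
  clear_value N D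
  simp only [Tab, Prod.mk.injEq]
  refine ⟨?_, ?_, ?_⟩
  · field_simp
    rw [hD_def]
    ring
  · field_simp
    rw [hD_def]
    ring
  · rw [hsum]
    field_simp
    rw [hN_def, hD_def]
    ring

lemma Tab_Tab_of_pos_of_ne (p : ℝ × ℝ × ℝ) (hr1 : 0 < p.1) (hr2 : 0 < p.2.1) (hy : 0 < p.2.2)
    (hs : 0 < a + b * p.2.2) (hD : p.2.1 + b * p.1 ≠ 0) : Tab a b (Tab a b p) = p :=
  Tab_Tab hr1.ne' hr2.ne' hD (by positivity)

end Tab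

/-- The paper's `D⁺`. -/
def domainPlus (a b : ℝ) : Set (ℝ × ℝ × ℝ) :=
  {p | 0 < p.1 ∧ 0 < p.2.1 ∧ 0 < p.2.2 ∧ 0 < a + b * p.1 ∧ 0 < p.2.1 - a ∧ 0 < a + b * p.2.2}

/-- The paper's `D⁻`. -/
def domainMinus (a b : ℝ) : Set (ℝ × ℝ × ℝ) :=
  {p | 0 < p.1 ∧ 0 < p.2.1 ∧ 0 < p.2.2 ∧ a + b * p.1 < 0 ∧ p.2.1 - a < 0 ∧ 0 < a + b * p.2.2}

lemma mapsTo_Tab_domainPlus (a b : ℝ) : Set.MapsTo (Tab a b) (domainPlus a b) (domainPlus a b) := by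
  rintro ⟨r1, r2, y⟩ ⟨hr1, hr2, hy, hr1', hr2', hs⟩
  have hD : 0 < r2 + b * r1 := by linarith
  refine ⟨Tab_fst_pos hr1 hr2 hy hs, Tab_snd_fst_pos hr1 hr2 hy hs, ?_, ?_, ?_, ?_⟩
  · exact div_pos (mul_pos hr1 hr2') hD
  · rw [add_mul_Tab_fst hr2.ne']
    positivity
  · rw [Tab_snd_fst_sub hr1.ne']
    positivity
  · rw [add_mul_Tab_snd_snd hD.ne']
    positivity

lemma mapsTo_Tab_domainMinus (a b : ℝ) :
    Set.MapsTo (Tab a b) (domainMinus a b) (domainMinus a b) := by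
  rintro ⟨r1, r2, y⟩ ⟨hr1, hr2, hy, hr1', hr2', hs⟩
  have hD : r2 + b * r1 < 0 := by linarith
  refine ⟨Tab_fst_pos hr1 hr2 hy hs, Tab_snd_fst_pos hr1 hr2 hy hs, ?_, ?_, ?_, ?_⟩
  · exact div_pos_of_neg_of_neg (mul_neg_of_pos_of_neg hr1 hr2') hD
  · rw [add_mul_Tab_fst hr2.ne']
    exact div_neg_of_neg_of_pos (mul_neg_of_pos_of_neg hs hD) hr2
  · rw [Tab_snd_fst_sub hr1.ne']
    exact div_neg_of_neg_of_pos (mul_neg_of_pos_of_neg hy hD) hr1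
  · rw [add_mul_Tab_snd_snd hD.ne]
    exact div_pos_of_neg_of_neg (mul_neg_of_pos_of_neg hr2 hr1') hD

lemma Tab_Tab_of_mem_domainPlus {a b : ℝ} {p : ℝ × ℝ × ℝ} (hp : p ∈ domainPlus a b) :
    Tab a b (Tab a b p) = p := by
  obtain ⟨hr1, hr2, hy, hr1', hr2', hs⟩ := hp
  exact Tab_Tab_of_pos_of_ne p hr1 hr2 hy hs (by linarith)

lemma Tab_Tab_of_mem_domainMinus {a b : ℝ} {p : ℝ × ℝ × ℝ} (hp : p ∈ domainMinus a b) :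
    Tab a b (Tab a b p) = p := by
  obtain ⟨hr1, hr2, hy, hr1', hr2', hs⟩ := hp
  exact Tab_Tab_of_pos_of_ne p hr1 hr2 hy hs (by linarith)

theorem stmt_4_general (a b : ℝ) :
    (({p : ℝ × ℝ × ℝ | 0 < p.1 ∧ 0 < p.2.1 ∧ 0 < p.2.2 ∧
        0 < a + b * p.1 ∧ 0 < p.2.1 - a ∧ 0 < a + b * p.2.2} : Set (ℝ × ℝ × ℝ)).Nonempty →
      Set.MapsTo (Tab a b)
        {p : ℝ × ℝ × ℝ | 0 < p.1 ∧ 0 < p.2.1 ∧ 0 < p.2.2 ∧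
          0 < a + b * p.1 ∧ 0 < p.2.1 - a ∧ 0 < a + b * p.2.2}
        {p : ℝ × ℝ × ℝ | 0 < p.1 ∧ 0 < p.2.1 ∧ 0 < p.2.2 ∧
          0 < a + b * p.1 ∧ 0 < p.2.1 - a ∧ 0 < a + b * p.2.2} ∧
      ∀ p ∈ {p : ℝ × ℝ × ℝ | 0 < p.1 ∧ 0 < p.2.1 ∧ 0 < p.2.2 ∧
          0 < a + b * p.1 ∧ 0 < p.2.1 - a ∧ 0 < a + b * p.2.2},
        Tab a b (Tab a b p) = p) ∧
    (({p : ℝ × ℝ × ℝ | 0 < p.1 ∧ 0 < p.2.1 ∧ 0 < p.2.2 ∧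
        a + b * p.1 < 0 ∧ p.2.1 - a < 0 ∧ 0 < a + b * p.2.2} : Set (ℝ × ℝ × ℝ)).Nonempty →
      Set.MapsTo (Tab a b)
        {p : ℝ × ℝ × ℝ | 0 < p.1 ∧ 0 < p.2.1 ∧ 0 < p.2.2 ∧
          a + b * p.1 < 0 ∧ p.2.1 - a < 0 ∧ 0 < a + b * p.2.2}
        {p : ℝ × ℝ × ℝ | 0 < p.1 ∧ 0 < p.2.1 ∧ 0 < p.2.2 ∧
          a + b * p.1 < 0 ∧ p.2.1 - a < 0 ∧ 0 < a + b * p.2.2} ∧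
      ∀ p ∈ {p : ℝ × ℝ × ℝ | 0 < p.1 ∧ 0 < p.2.1 ∧ 0 < p.2.2 ∧
          a + b * p.1 < 0 ∧ p.2.1 - a < 0 ∧ 0 < a + b * p.2.2},
        Tab a b (Tab a b p) = p) :=
  ⟨fun _ => ⟨mapsTo_Tab_domainPlus a b, fun _ => Tab_Tab_of_mem_domainPlus⟩,
    fun _ => ⟨mapsTo_Tab_domainMinus a b, fun _ => Tab_Tab_of_mem_domainMinus⟩⟩

/-- `T^{(a,b)}` is an involution on each of the sets `D⁺` and `D⁻`
(when nonempty): it maps each set into itself and `T ∘ T = id` there. -/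
theorem stmt_4 (a b : ℝ) (hab : 0 < max a b) :
    (({p : ℝ × ℝ × ℝ | 0 < p.1 ∧ 0 < p.2.1 ∧ 0 < p.2.2 ∧
        0 < a + b * p.1 ∧ 0 < p.2.1 - a ∧ 0 < a + b * p.2.2} : Set (ℝ × ℝ × ℝ)).Nonempty →
      Set.MapsTo (Tab a b)
        {p : ℝ × ℝ × ℝ | 0 < p.1 ∧ 0 < p.2.1 ∧ 0 < p.2.2 ∧
          0 < a + b * p.1 ∧ 0 < p.2.1 - a ∧ 0 < a + b * p.2.2}
        {p : ℝ × ℝ × ℝ | 0 < p.1 ∧ 0 < p.2.1 ∧ 0 < p.2.2 ∧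
          0 < a + b * p.1 ∧ 0 < p.2.1 - a ∧ 0 < a + b * p.2.2} ∧
      ∀ p ∈ {p : ℝ × ℝ × ℝ | 0 < p.1 ∧ 0 < p.2.1 ∧ 0 < p.2.2 ∧
          0 < a + b * p.1 ∧ 0 < p.2.1 - a ∧ 0 < a + b * p.2.2},
        Tab a b (Tab a b p) = p) ∧
    (({p : ℝ × ℝ × ℝ | 0 < p.1 ∧ 0 < p.2.1 ∧ 0 < p.2.2 ∧
        a + b * p.1 < 0 ∧ p.2.1 - a < 0 ∧ 0 < a + b * p.2.2} : Set (ℝ × ℝ × ℝ)).Nonempty →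
      Set.MapsTo (Tab a b)
        {p : ℝ × ℝ × ℝ | 0 < p.1 ∧ 0 < p.2.1 ∧ 0 < p.2.2 ∧
          a + b * p.1 < 0 ∧ p.2.1 - a < 0 ∧ 0 < a + b * p.2.2}
        {p : ℝ × ℝ × ℝ | 0 < p.1 ∧ 0 < p.2.1 ∧ 0 < p.2.2 ∧
          a + b * p.1 < 0 ∧ p.2.1 - a < 0 ∧ 0 < a + b * p.2.2} ∧
      ∀ p ∈ {p : ℝ × ℝ × ℝ | 0 < p.1 ∧ 0 < p.2.1 ∧ 0 < p.2.2 ∧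
          a + b * p.1 < 0 ∧ p.2.1 - a < 0 ∧ 0 < a + b * p.2.2},
        Tab a b (Tab a b p) = p) :=
  stmt_4_general a b
end

section
/- Let a, b be real numbers with max(a,b) > 0, and let O1, O2, O3 ⊂ (0,∞) with O3 not a singleton. If T^{(a,b)}(r1,r2,y) := (y + (a+by)·r1/r2, y·r2/r1 + (a+by), r1·(r2-a)/(r2+b·r1)) is a polymer involution on O1 × O2 × O3 adapted to h(y) = a+by, then either O1 × O2 × O3 ⊆ D⁺_{a,b} or O1 × O2 × O3 ⊆ D⁻_{a,b}, where D^±_{a,b} := {x > 0 : ±(a+bx) > 0} × {x > 0 : ±(x-a) > 0} × {x > 0 : a+bx > 0}. -/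
theorem pos_or_neg_of_forall_mul_pos {α β R : Type*} [MulZeroClass R] [LinearOrder R]
    [PosMulMono R] [MulPosMono R] {s : Set α} {t : Set β} {f : α → R} {g : β → R}
    (hs : s.Nonempty) (ht : t.Nonempty) (h : ∀ x ∈ s, ∀ y ∈ t, 0 < f x * g y) :
    ((∀ x ∈ s, 0 < f x) ∧ ∀ y ∈ t, 0 < g y) ∨ ((∀ x ∈ s, f x < 0) ∧ ∀ y ∈ t, g y < 0) := by
  obtain ⟨x₀, hx₀⟩ := hs
  obtain ⟨y₀, hy₀⟩ := ht
  have sign x (hx : x ∈ s) y (hy : y ∈ t) := pos_and_pos_or_neg_and_neg_of_mul_pos (h x hx y hy)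
  rcases sign x₀ hx₀ y₀ hy₀ with ⟨hf₀, hg₀⟩ | ⟨hf₀, hg₀⟩
  · refine .inl ⟨fun x hx => ?_, fun y hy => ?_⟩
    · have := sign x hx y₀ hy₀; grind
    · have := sign x₀ hx₀ y hy; grind
  · refine .inr ⟨fun x hx => ?_, fun y hy => ?_⟩
    · have := sign x hx y₀ hy₀; grind
    · have := sign x₀ hx₀ y hy; grind

theorem mul_pos_of_Tab_snd_snd_pos {a b r₁ r₂ y : ℝ} (hr₁ : 0 < r₁) (hr₂ : 0 < r₂)
    (hy : 0 < (Tab a b (r₁, r₂, y)).2.2) (hay : 0 < a + b * (Tab a b (r₁, r₂, y)).2.2) :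
    0 < (a + b * r₁) * (r₂ - a) := by
  set y' := (Tab a b (r₁, r₂, y)).2.2
  have hD : r₂ + b * r₁ ≠ 0 := by
    intro hD
    simp [y', Tab, hD] at hy
  have hy' : y' * (r₂ + b * r₁) = r₁ * (r₂ - a) := div_mul_cancel₀ _ hD
  have hay' : (a + b * y') * (r₂ + b * r₁) = r₂ * (a + b * r₁) := by
    linear_combination b * hy'
  have : 0 < r₁ * r₂ * ((a + b * r₁) * (r₂ - a)) :=
    calc 0 < y' * (a + b * y') * (r₂ + b * r₁) ^ 2 :=
          mul_pos (mul_pos hy hay) (sq_pos_of_ne_zero hD)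
      _ = r₁ * r₂ * ((a + b * r₁) * (r₂ - a)) := by
          linear_combination (a + b * y') * (r₂ + b * r₁) * hy' + r₁ * (r₂ - a) * hay'
  exact pos_of_mul_pos_right this (by positivity)

theorem stmt_5_general (a b : ℝ)
    (O1 O2 O3 : Set ℝ)
    (hO1 : O1 ⊆ Set.Ioi (0 : ℝ)) (hO2 : O2 ⊆ Set.Ioi (0 : ℝ)) (hO3 : O3 ⊆ Set.Ioi (0 : ℝ))
    (hpos : ∀ y ∈ O3, 0 < a + b * y)
    (hmap : Set.MapsTo (Tab a b) (O1 ×ˢ O2 ×ˢ O3) (O1 ×ˢ O2 ×ˢ O3)) :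
    (O1 ×ˢ O2 ×ˢ O3 ⊆
      {x : ℝ | 0 < x ∧ 0 < a + b * x} ×ˢ {x : ℝ | 0 < x ∧ 0 < x - a} ×ˢ
        {x : ℝ | 0 < x ∧ 0 < a + b * x}) ∨
    (O1 ×ˢ O2 ×ˢ O3 ⊆
      {x : ℝ | 0 < x ∧ a + b * x < 0} ×ˢ {x : ℝ | 0 < x ∧ x - a < 0} ×ˢ
        {x : ℝ | 0 < x ∧ 0 < a + b * x}) := by
  rcases (O1 ×ˢ O2 ×ˢ O3).eq_empty_or_nonempty with hempty | ⟨⟨x₁, x₂, y₀⟩, hx₁, hx₂, hy₀⟩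
  · exact .inl (hempty ▸ Set.empty_subset _)
  have hsign : ∀ r₁ ∈ O1, ∀ r₂ ∈ O2, 0 < (a + b * r₁) * (r₂ - a) := fun r₁ hr₁ r₂ hr₂ ↦
    have hy' := (hmap (show (r₁, r₂, y₀) ∈ _ from ⟨hr₁, hr₂, hy₀⟩)).2.2
    mul_pos_of_Tab_snd_snd_pos (hO1 hr₁) (hO2 hr₂) (hO3 hy') (hpos _ hy')
  rcases pos_or_neg_of_forall_mul_pos ⟨x₁, hx₁⟩ ⟨x₂, hx₂⟩ hsign with ⟨h₁, h₂⟩ | ⟨h₁, h₂⟩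
  · refine .inl fun p ⟨hp₁, hp₂, hp₃⟩ ↦ ?_
    exact ⟨⟨hO1 hp₁, h₁ _ hp₁⟩, ⟨hO2 hp₂, h₂ _ hp₂⟩, hO3 hp₃, hpos _ hp₃⟩
  · refine .inr fun p ⟨hp₁, hp₂, hp₃⟩ ↦ ?_
    exact ⟨⟨hO1 hp₁, h₁ _ hp₁⟩, ⟨hO2 hp₂, h₂ _ hp₂⟩, hO3 hp₃, hpos _ hp₃⟩

/-- if `T^{(a,b)}` is a polymer involution on `O1 × O2 × O3`
adapted to `h(y) = a + by` (so in particular `a + by > 0` on `O3`), and `O3`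
is not a singleton, then `O1 × O2 × O3 ⊆ D⁺` or `O1 × O2 × O3 ⊆ D⁻`. -/
theorem stmt_5 (a b : ℝ) (hab : 0 < max a b)
    (O1 O2 O3 : Set ℝ)
    (hO1 : O1 ⊆ Set.Ioi (0 : ℝ)) (hO2 : O2 ⊆ Set.Ioi (0 : ℝ)) (hO3 : O3 ⊆ Set.Ioi (0 : ℝ))
    (hO3ns : ∃ y1 ∈ O3, ∃ y2 ∈ O3, y1 ≠ y2)
    (hpos : ∀ y ∈ O3, 0 < a + b * y)
    (hmap : Set.MapsTo (Tab a b) (O1 ×ˢ O2 ×ˢ O3) (O1 ×ˢ O2 ×ˢ O3))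
    (hinv : ∀ p ∈ O1 ×ˢ O2 ×ˢ O3, Tab a b (Tab a b p) = p) :
    (O1 ×ˢ O2 ×ˢ O3 ⊆
      {x : ℝ | 0 < x ∧ 0 < a + b * x} ×ˢ {x : ℝ | 0 < x ∧ 0 < x - a} ×ˢ
        {x : ℝ | 0 < x ∧ 0 < a + b * x}) ∨
    (O1 ×ˢ O2 ×ˢ O3 ⊆
      {x : ℝ | 0 < x ∧ a + b * x < 0} ×ˢ {x : ℝ | 0 < x ∧ x - a < 0} ×ˢ
        {x : ℝ | 0 < x ∧ 0 < a + b * x}) :=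
  stmt_5_general a b O1 O2 O3 hO1 hO2 hO3 hpos hmap
end

section
/- Let A be a positive random variable with A ~ Gamma(λ_A + λ_B, β) and B an independent random variable with B ~ Beta(λ_A, λ_B), where λ_A, λ_B, β > 0. Then AB and A(1-B) are independent, with AB ~ Gamma(λ_A, β) and A(1-B) ~ Gamma(λ_B, β). -/
open MeasureTheory ProbabilityTheory

/-- The Gamma(a, b) distribution, with density `Γ(a)⁻¹ bᵃ x^{a-1} e^{-bx}` on `(0,∞)`. -/
noncomputable def gammaDist (a b : ℝ) : Measure ℝ :=
  volume.withDensity fun x => ENNReal.ofReal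
    (if 0 < x then (Real.Gamma a)⁻¹ * b ^ a * x ^ (a - 1) * Real.exp (-(b * x)) else 0)

/-- The Beta(a, b) distribution, with density
`(Γ(a+b)/(Γ(a)Γ(b))) x^{a-1} (1-x)^{b-1}` on `(0,1)`. -/
noncomputable def betaDist (a b : ℝ) : Measure ℝ :=
  volume.withDensity fun x => ENNReal.ofReal
    (if 0 < x ∧ x < 1 then
      (Real.Gamma (a + b) / (Real.Gamma a * Real.Gamma b)) * x ^ (a - 1) * (1 - x) ^ (b - 1)
    else 0)

/-! The map `(a, x) ↦ (a x, a (1 - x))` sends `(0, ∞) × (0, 1)` injectively onto `(0, ∞)²`, with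
Jacobian determinant `-a`. At the preimage of a point, the product of the `Gamma(λA, β)` and
`Gamma(λB, β)` densities times `a` equals the product of the `Gamma(λA + λB, β)` and
`Beta(λA, λB)` densities: the powers of `a` and the exponentials combine, and the normalising
constants match because `B(λA, λB) = Γ(λA) Γ(λB) / Γ(λA + λB)`. So by the change-of-variables
formula `(AB, A(1 - B))` has the product law, which gives both the marginals and independence. -/

open Real Set
open scoped ENNReal

lemma gammaDist_eq_gammaMeasure (a b : ℝ) : gammaDist a b = gammaMeasure a b := by
  refine withDensity_congr_ae ?_
  filter_upwards [Measure.ae_ne volume (0 : ℝ)] with x hx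
  rcases hx.lt_or_gt with hneg | hpos
  · simp [gammaPDF_of_neg hneg, hneg.not_gt]
  · rw [if_pos hpos, gammaPDF_of_nonneg hpos.le]
    ring_nf

lemma betaDist_eq_betaMeasure (a b : ℝ) : betaDist a b = betaMeasure a b := by
  refine congrArg volume.withDensity (funext fun x => ?_)
  rw [betaPDF_eq, beta, one_div_div]

lemma measurable_gammaPDF (a r : ℝ) : Measurable (gammaPDF a r) :=
  (measurable_gammaPDFReal a r).ennreal_ofReal

lemma measurable_betaPDF (a b : ℝ) : Measurable (betaPDF a b) :=
  (measurable_betaPDFReal a b).ennreal_ofReal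

lemma gammaMeasure_restrict_Ioi (a r : ℝ) :
    (gammaMeasure a r).restrict (Ioi 0) = gammaMeasure a r := by
  refine Measure.restrict_eq_self_of_ae_mem ?_
  rw [gammaMeasure, ae_withDensity_iff (measurable_gammaPDF a r)]
  filter_upwards [Measure.ae_ne volume (0 : ℝ)] with x hx hpdf
  exact hx.lt_or_gt.resolve_left fun hneg => hpdf (gammaPDF_of_neg hneg)

lemma betaMeasure_restrict_Ioo (a b : ℝ) :
    (betaMeasure a b).restrict (Ioo 0 1) = betaMeasure a b := by
  refine Measure.restrict_eq_self_of_ae_mem ?_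
  rw [betaMeasure, ae_withDensity_iff (measurable_betaPDF a b)]
  refine ae_of_all _ fun x hpdf => ⟨?_, ?_⟩
  · exact not_le.mp fun hx => hpdf (betaPDF_eq_zero_of_nonpos hx)
  · exact not_le.mp fun hx => hpdf (betaPDF_eq_zero_of_one_le hx)

lemma restrict_withDensity_prod_restrict_withDensity {α β : Type*} [MeasurableSpace α]
    [MeasurableSpace β] {μ : Measure α} {ν : Measure β} [SFinite μ] [SFinite ν]
    {f : α → ℝ≥0∞} {g : β → ℝ≥0∞} (hf : Measurable f) (hg : Measurable g)
    {s : Set α} {t : Set β} (hs : MeasurableSet s) (ht : MeasurableSet t) :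
    ((μ.withDensity f).restrict s).prod ((ν.withDensity g).restrict t) =
      ((μ.prod ν).restrict (s ×ˢ t)).withDensity fun z => f z.1 * g z.2 := by
  rw [restrict_withDensity hs, restrict_withDensity ht, prod_withDensity hf hg,
    Measure.prod_restrict]

section ChangeOfVariables

variable {E : Type*} [NormedAddCommGroup E] [NormedSpace ℝ E] [FiniteDimensional ℝ E]
  [MeasurableSpace E] [BorelSpace E] (μ : Measure E) [μ.IsAddHaarMeasure]
  {f : E → E} {f' : E → E →L[ℝ] E} {s : Set E}

theorem map_restrict_withDensity_eq_of_abs_det_fderiv_mul (hs : MeasurableSet s)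
    (hf' : ∀ x ∈ s, HasFDerivWithinAt f (f' x) s x) (hf : InjOn f s) {F G : E → ℝ≥0∞}
    (hFG : ∀ x ∈ s, ENNReal.ofReal |(f' x).det| * G (f x) = F x) :
    ((μ.restrict s).withDensity F).map f = (μ.restrict (f '' s)).withDensity G := by
  have hfm : AEMeasurable f (μ.restrict s) :=
    ContinuousOn.aemeasurable (fun x hx => (hf' x hx).continuousWithinAt) hs
  ext t ht
  rw [Measure.map_apply_of_aemeasurable (hfm.mono_ac (withDensity_absolutelyContinuous _ _)) ht,
    withDensity_apply' _ _, withDensity_apply _ ht, ← lintegral_indicator ht,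
    lintegral_image_eq_lintegral_abs_det_fderiv_mul μ hs hf' hf,
    ← lintegral_indicator₀ (hfm.nullMeasurableSet_preimage ht)]
  refine setLIntegral_congr_fun hs fun x hx => ?_
  by_cases hxt : f x ∈ t
  · rw [indicator_of_mem hxt, indicator_of_mem (show x ∈ f ⁻¹' t from hxt), hFG x hx]
  · rw [indicator_of_notMem hxt, indicator_of_notMem (show x ∉ f ⁻¹' t from hxt), mul_zero]

end ChangeOfVariables

def splitMap (p : ℝ × ℝ) : ℝ × ℝ := (p.1 * p.2, p.1 * (1 - p.2))

lemma measurable_splitMap : Measurable splitMap := by unfold splitMap; fun_prop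

lemma image_splitMap : splitMap '' (Ioi 0 ×ˢ Ioo 0 1) = Ioi 0 ×ˢ Ioi 0 := by
  ext ⟨u, v⟩
  simp only [splitMap, mem_image, mem_prod, mem_Ioi, mem_Ioo, Prod.exists, Prod.mk.injEq]
  constructor
  · rintro ⟨a, x, ⟨ha, hx0, hx1⟩, rfl, rfl⟩
    exact ⟨mul_pos ha hx0, mul_pos ha (sub_pos.mpr hx1)⟩
  · rintro ⟨hu, hv⟩
    have huv : 0 < u + v := add_pos hu hv
    refine ⟨u + v, u / (u + v), ⟨huv, div_pos hu huv, (div_lt_one huv).mpr (by linarith)⟩, ?_, ?_⟩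
    · field_simp
    · field_simp
      ring

lemma injOn_splitMap : InjOn splitMap (Ioi 0 ×ˢ Ioo 0 1) := by
  rintro ⟨a, x⟩ ⟨ha, -⟩ ⟨a', x'⟩ - h
  simp only [splitMap, Prod.mk.injEq] at h
  obtain rfl : a = a' := by linarith [h.1, h.2]
  obtain rfl : x = x' := mul_left_cancel₀ (ne_of_gt ha) h.1
  rfl

noncomputable def splitMapDeriv (p : ℝ × ℝ) : ℝ × ℝ →L[ℝ] ℝ × ℝ :=
  LinearMap.toContinuousLinearMap
    (Matrix.toLin (Module.Basis.finTwoProd ℝ) (Module.Basis.finTwoProd ℝ)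
      !![p.2, p.1; 1 - p.2, -p.1])

lemma hasFDerivAt_splitMap (p : ℝ × ℝ) : HasFDerivAt splitMap (splitMapDeriv p) p := by
  rw [splitMapDeriv, Matrix.toLin_finTwoProd_toContinuousLinearMap]
  have h₁ : HasFDerivAt (fun p : ℝ × ℝ => p.1 * p.2)
      (p.1 • ContinuousLinearMap.snd ℝ ℝ ℝ + p.2 • ContinuousLinearMap.fst ℝ ℝ ℝ) p :=
    hasFDerivAt_fst.mul hasFDerivAt_snd
  have h₂ : HasFDerivAt (fun p : ℝ × ℝ => p.1 * (1 - p.2))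
      (p.1 • (0 - ContinuousLinearMap.snd ℝ ℝ ℝ) + (1 - p.2) • ContinuousLinearMap.fst ℝ ℝ ℝ) p :=
    hasFDerivAt_fst.mul ((hasFDerivAt_const 1 p).sub hasFDerivAt_snd)
  refine (h₁.prodMk h₂).congr_fderiv ?_
  congr 1 <;> module

lemma det_splitMapDeriv (p : ℝ × ℝ) : (splitMapDeriv p).det = -p.1 := by
  simp only [splitMapDeriv, ContinuousLinearMap.det, LinearMap.coe_toContinuousLinearMap,
    LinearMap.det_toLin, Matrix.det_fin_two_of]
  ring

lemma gammaPDFReal_add_mul_betaPDFReal {lA lB b a x : ℝ} (hlA : 0 < lA) (hlB : 0 < lB)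
    (hb : 0 < b) (ha : 0 < a) (hx₀ : 0 < x) (hx₁ : x < 1) :
    gammaPDFReal (lA + lB) b a * betaPDFReal lA lB x =
      a * (gammaPDFReal lA b (a * x) * gammaPDFReal lB b (a * (1 - x))) := by
  have hx₁' : 0 < 1 - x := sub_pos.mpr hx₁
  rw [gammaPDFReal, gammaPDFReal, gammaPDFReal, betaPDFReal, if_pos ha.le,
    if_pos (mul_pos ha hx₀).le, if_pos (mul_pos ha hx₁').le, if_pos ⟨hx₀, hx₁⟩, beta,
    mul_rpow ha.le hx₀.le, mul_rpow ha.le hx₁'.le, rpow_add hb,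
    show lA + lB - 1 = (lA - 1) + (lB - 1) + 1 by ring, rpow_add ha, rpow_add ha, rpow_one,
    show -(b * a) = -(b * (a * x)) + -(b * (a * (1 - x))) by ring, exp_add]
  have := (Gamma_pos_of_pos hlA).ne'
  have := (Gamma_pos_of_pos hlB).ne'
  have := (Gamma_pos_of_pos (add_pos hlA hlB)).ne'
  field_simp

theorem map_splitMap_gammaMeasure_prod_betaMeasure {lA lB b : ℝ} (hlA : 0 < lA) (hlB : 0 < lB)
    (hb : 0 < b) :
    ((gammaMeasure (lA + lB) b).prod (betaMeasure lA lB)).map splitMap =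
      (gammaMeasure lA b).prod (gammaMeasure lB b) := by
  -- Both laws are carried by the sets between which `splitMap` is a bijection.
  rw [← gammaMeasure_restrict_Ioi (lA + lB), ← betaMeasure_restrict_Ioo,
    ← gammaMeasure_restrict_Ioi lA, ← gammaMeasure_restrict_Ioi lB, gammaMeasure, gammaMeasure,
    gammaMeasure, betaMeasure]
  rw [restrict_withDensity_prod_restrict_withDensity (measurable_gammaPDF _ _)
      (measurable_betaPDF _ _) measurableSet_Ioi measurableSet_Ioo,
    restrict_withDensity_prod_restrict_withDensity (measurable_gammaPDF _ _)
      (measurable_gammaPDF _ _) measurableSet_Ioi measurableSet_Ioi,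
    ← Measure.volume_eq_prod, ← image_splitMap]
  refine map_restrict_withDensity_eq_of_abs_det_fderiv_mul volume
    (measurableSet_Ioi.prod measurableSet_Ioo)
    (fun p _ => (hasFDerivAt_splitMap p).hasFDerivWithinAt) injOn_splitMap ?_
  rintro ⟨a, x⟩ ⟨ha, hx₀, hx₁⟩
  replace ha : 0 < a := ha
  simp only [det_splitMapDeriv, abs_neg, abs_of_pos ha, splitMap, gammaPDF, betaPDF]
  rw [← ENNReal.ofReal_mul (gammaPDFReal_nonneg hlA hb _), ← ENNReal.ofReal_mul ha.le,
    ← ENNReal.ofReal_mul (gammaPDFReal_nonneg (add_pos hlA hlB) hb _),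
    gammaPDFReal_add_mul_betaPDFReal hlA hlB hb ha hx₀ hx₁]

lemma indepFun_and_map_eq_of_map_prod_eq_prod {Ω α β : Type*} [MeasurableSpace Ω]
    [MeasurableSpace α] [MeasurableSpace β] {μ : Measure Ω} [IsFiniteMeasure μ]
    {X : Ω → α} {Y : Ω → β} {ν₁ : Measure α} {ν₂ : Measure β} [IsProbabilityMeasure ν₁]
    [IsProbabilityMeasure ν₂] (hX : AEMeasurable X μ) (hY : AEMeasurable Y μ)
    (h : μ.map (fun ω => (X ω, Y ω)) = ν₁.prod ν₂) :
    IndepFun X Y μ ∧ μ.map X = ν₁ ∧ μ.map Y = ν₂ := by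
  have hXY : AEMeasurable (fun ω => (X ω, Y ω)) μ := hX.prodMk hY
  have hmapX : μ.map X = ν₁ := by
    rw [← one_smul ℝ≥0∞ ν₁, ← measure_univ (μ := ν₂), ← Measure.map_fst_prod, ← h,
      AEMeasurable.map_map_of_aemeasurable measurable_fst.aemeasurable hXY]
    rfl
  have hmapY : μ.map Y = ν₂ := by
    rw [← one_smul ℝ≥0∞ ν₂, ← measure_univ (μ := ν₁), ← Measure.map_snd_prod, ← h,
      AEMeasurable.map_map_of_aemeasurable measurable_snd.aemeasurable hXY]
    rfl
  refine ⟨?_, hmapX, hmapY⟩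
  rw [indepFun_iff_map_prod_eq_prod_map_map hX hY, h, hmapX, hmapY]

/-- if `A ~ Gamma(λA+λB, β)` and `B ~ Beta(λA, λB)` are independent,
then `AB` and `A(1-B)` are independent with `AB ~ Gamma(λA,β)`, `A(1-B) ~ Gamma(λB,β)`. -/
theorem stmt_8 {Ω : Type*} [MeasurableSpace Ω] (μ : Measure Ω) [IsProbabilityMeasure μ]
    (A B : Ω → ℝ) (hA : Measurable A) (hB : Measurable B)
    (lA lB b : ℝ) (hlA : 0 < lA) (hlB : 0 < lB) (hb : 0 < b)
    (hAdist : μ.map A = gammaDist (lA + lB) b) (hBdist : μ.map B = betaDist lA lB)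
    (hind : IndepFun A B μ) :
    IndepFun (fun ω => A ω * B ω) (fun ω => A ω * (1 - B ω)) μ ∧
    μ.map (fun ω => A ω * B ω) = gammaDist lA b ∧
    μ.map (fun ω => A ω * (1 - B ω)) = gammaDist lB b := by
  simp only [gammaDist_eq_gammaMeasure, betaDist_eq_betaMeasure] at hAdist hBdist ⊢
  have := isProbabilityMeasure_gammaMeasure hlA hb
  have := isProbabilityMeasure_gammaMeasure hlB hb
  have hjoint : μ.map (fun ω => (A ω, B ω)) =
      (gammaMeasure (lA + lB) b).prod (betaMeasure lA lB) := by
    rw [← hAdist, ← hBdist]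
    exact (indepFun_iff_map_prod_eq_prod_map_map hA.aemeasurable hB.aemeasurable).mp hind
  refine indepFun_and_map_eq_of_map_prod_eq_prod (hA.mul hB).aemeasurable
    (hA.mul (measurable_const.sub hB)).aemeasurable ?_
  rw [← map_splitMap_gammaMeasure_prod_betaMeasure hlA hlB hb, ← hjoint,
    Measure.map_map measurable_splitMap (hA.prodMk hB)]
  rfl
end

section
/- For positive reals r1, r2, y with r2 + r1 ≠ 0, conjugating T^{(1,1)} by the reflection ρ(r1,r2,y) := (r2, r1, 1+y) gives ρ ∘ T^{(1,1)} ∘ ρ⁻¹ = T^{(-1,1)}, i.e. ρ(T^{(1,1)}(ρ⁻¹(r1,r2,y))) = T^{(-1,1)}(r1,r2,y). -/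
/-- The left side is `ρ_c (T^{(c,1)} (ρ_c⁻¹ p))` for `ρ_c(r1,r2,y) = (r2, r1, c + y)`. -/
theorem swap_shift_conj_Tab (c r1 r2 y : ℝ) (hden : r2 + r1 ≠ 0) :
    ((Tab c 1 (r2, r1, y - c)).2.1, (Tab c 1 (r2, r1, y - c)).1,
        c + (Tab c 1 (r2, r1, y - c)).2.2)
      = Tab (-c) 1 (r1, r2, y) := by
  simp only [Tab, Prod.mk.injEq, one_mul]
  refine ⟨by ring, by ring, ?_⟩
  rw [add_comm r1 r2]
  field_simp
  ring

theorem stmt_17_general (r1 r2 y : ℝ)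
    (hden : r2 + r1 ≠ 0) :
    ((Tab 1 1 (r2, r1, y - 1)).2.1, (Tab 1 1 (r2, r1, y - 1)).1,
        1 + (Tab 1 1 (r2, r1, y - 1)).2.2)
      = Tab (-1) 1 (r1, r2, y) :=
  swap_shift_conj_Tab 1 r1 r2 y hden

/-- conjugating `T^{(1,1)}` by the reflection
`ρ(r1,r2,y) = (r2, r1, 1+y)` (with `ρ⁻¹(r1,r2,y) = (r2, r1, y-1)`) gives
`T^{(-1,1)}`: `ρ(T^{(1,1)}(ρ⁻¹(r1,r2,y))) = T^{(-1,1)}(r1,r2,y)`. -/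
theorem stmt_17 (r1 r2 y : ℝ) (hr1 : 0 < r1) (hr2 : 0 < r2) (hy : 0 < y)
    (hden : r2 + r1 ≠ 0) :
    ((Tab 1 1 (r2, r1, y - 1)).2.1, (Tab 1 1 (r2, r1, y - 1)).1,
        1 + (Tab 1 1 (r2, r1, y - 1)).2.2)
      = Tab (-1) 1 (r1, r2, y) :=
  stmt_17_general r1 r2 y hden
end

section
/- Let O ⊂ (0,∞)² and O3 ⊂ (0,∞) be open with O3 connected, and let h : O3 → (0,∞) be continuously differentiable. Suppose (T1,T2)(O × O3) = O where T1(r1,r2,y) = y + h(y)·r1/r2 and T2(r1,r2,y) = y·r2/r1 + h(y), and suppose L(s,y) := s + h'(y) does not vanish on Q(O) × O3. Then G(s,y) := (y + h(y)/s, y·s + h(y)) is a C¹-diffeomorphism from Q(O) × O3 onto O, with Jacobian determinant det DG(s,y) = -(L(s,y)/s)·(y + h(y)/s). -/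
/-!
Writing `s = r₂ / r₁`, one has `G (s, y) = (T₁, T₂)(r₁, r₂, y)`, so the image of `G` is
that of `(T₁, T₂)`, namely `O`. The second component of `G (s, y)` is `s` times the first
one, which is positive, so `G (s, y)` determines `s`; for fixed `s` the second component
`y ↦ y s + h y` has derivative `L (s, y) ≠ 0` on the interval `O3`, so by Darboux's theorem it
is strictly monotone there and `G (s, y)` also determines `y`. The Jacobian is an explicit
`2 × 2` determinant.
-/

open Set

theorem Convex.injOn_of_hasDerivAt_ne_zero {D : Set ℝ} (hD : Convex ℝ D) {f f' : ℝ → ℝ}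
    (hf : ∀ x ∈ D, HasDerivAt f (f' x) x) (hf' : ∀ x ∈ D, f' x ≠ 0) : InjOn f D := by
  have hcont : ContinuousOn f D := fun x hx => (hf x hx).continuousAt.continuousWithinAt
  have hint : ∀ x ∈ interior D, HasDerivWithinAt f (f' x) (interior D) x :=
    fun x hx => (hf x (interior_subset hx)).hasDerivWithinAt
  rcases hasDerivWithinAt_forall_lt_or_forall_gt_of_forall_ne hD
    (fun x hx => (hf x hx).hasDerivWithinAt) hf' with hneg | hpos
  · exact (strictAntiOn_of_hasDerivWithinAt_neg hD hcont hint
      fun x hx => hneg x (interior_subset hx)).injOn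
  · exact (strictMonoOn_of_hasDerivWithinAt_pos hD hcont hint
      fun x hx => hpos x (interior_subset hx)).injOn

noncomputable section

namespace RatioCoordinates

variable (h : ℝ → ℝ)

def Q (O : Set (ℝ × ℝ)) : Set ℝ := {s : ℝ | ∃ p ∈ O, s = p.2 / p.1}

def G (q : ℝ × ℝ) : ℝ × ℝ := (q.2 + h q.2 / q.1, q.2 * q.1 + h q.2)

def T (p : ℝ × ℝ × ℝ) : ℝ × ℝ :=
  (p.2.2 + h p.2.2 * p.1 / p.2.1, p.2.2 * p.2.1 / p.1 + h p.2.2)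

def dG (h' s y : ℝ) : ℝ × ℝ →L[ℝ] ℝ × ℝ :=
  LinearMap.toContinuousLinearMap <|
    Matrix.toLin (Module.Basis.finTwoProd ℝ) (Module.Basis.finTwoProd ℝ)
      !![-(h y / s ^ 2), 1 + h' / s; y, s + h']

variable {h}

theorem pos_of_mem_Q {O : Set (ℝ × ℝ)} (hO : O ⊆ Ioi 0 ×ˢ Ioi 0) {s : ℝ}
    (hs : s ∈ Q O) : 0 < s := by
  obtain ⟨p, hp, rfl⟩ := hs
  exact div_pos (hO hp).2 (hO hp).1

theorem G_div_eq_T {r₁ r₂ : ℝ} (hr₁ : r₁ ≠ 0) (hr₂ : r₂ ≠ 0) (y : ℝ) :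
    G h (r₂ / r₁, y) = T h (r₁, r₂, y) := by
  simp only [G, T, Prod.mk.injEq]
  constructor <;> field_simp

theorem image_G_eq_image_T (O : Set (ℝ × ℝ)) (hO : O ⊆ Ioi 0 ×ˢ Ioi 0) (O3 : Set ℝ) :
    G h '' (Q O ×ˢ O3) = T h '' {p | (p.1, p.2.1) ∈ O ∧ p.2.2 ∈ O3} := by
  ext x
  constructor
  · rintro ⟨⟨_, y⟩, ⟨⟨p, hp, rfl⟩, hy⟩, rfl⟩
    exact ⟨(p.1, p.2, _), ⟨hp, hy⟩, (G_div_eq_T (hO hp).1.ne' (hO hp).2.ne' _).symm⟩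
  · rintro ⟨p, ⟨hp, hy⟩, rfl⟩
    exact ⟨(p.2.1 / p.1, p.2.2), ⟨⟨_, hp, rfl⟩, hy⟩,
      G_div_eq_T (hO hp).1.ne' (hO hp).2.ne' _⟩

theorem injOn_G {S U : Set ℝ} (hS : S ⊆ Ioi 0) (hU : Convex ℝ U) (hUpos : U ⊆ Ioi 0)
    (hpos : ∀ y ∈ U, 0 < h y) {h' : ℝ → ℝ} (hh' : ∀ y ∈ U, HasDerivAt h (h' y) y)
    (hL : ∀ s ∈ S, ∀ y ∈ U, s + h' y ≠ 0) : InjOn (G h) (S ×ˢ U) := by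
  rintro ⟨s, y⟩ ⟨hs, hy⟩ ⟨s', y'⟩ ⟨hs', hy'⟩ hG
  simp only [G, Prod.mk.injEq] at hG
  obtain ⟨h₁, h₂⟩ := hG
  have hspos : 0 < s := hS hs
  have hs'pos : 0 < s' := hS hs'
  have hfst : 0 < y + h y / s := add_pos (hUpos hy) (div_pos (hpos y hy) hspos)
  have hsnd_eq : ∀ t ≠ 0, ∀ z, z * t + h z = t * (z + h z / t) := fun t ht z => by field_simp
  have hss' : s = s' :=
    mul_right_cancel₀ hfst.ne'
      (by rw [← hsnd_eq s hspos.ne', h₂, hsnd_eq s' hs'pos.ne', ← h₁])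
  subst hss'
  have hinj : InjOn (fun z => z * s + h z) U :=
    hU.injOn_of_hasDerivAt_ne_zero
      (fun z hz =>
        (((hasDerivAt_id z).mul_const s).add (hh' z hz)).congr_deriv (by rw [one_mul]))
      (hL s hs)
  exact congrArg (Prod.mk s) (hinj hy hy' h₂)

theorem contDiffOn_G {n : WithTop ℕ∞} {S U : Set ℝ} (hS : ∀ s ∈ S, s ≠ 0)
    (hh : ContDiffOn ℝ n h U) : ContDiffOn ℝ n (G h) (S ×ˢ U) := by
  have hcomp : ContDiffOn ℝ n (fun q : ℝ × ℝ => h q.2) (S ×ˢ U) :=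
    hh.comp contDiff_snd.contDiffOn fun q hq => hq.2
  exact (contDiff_snd.contDiffOn.add
    (hcomp.div contDiff_fst.contDiffOn fun q hq => hS _ hq.1)).prodMk
    ((contDiff_snd.mul contDiff_fst).contDiffOn.add hcomp)

open ContinuousLinearMap in
theorem hasFDerivAt_G {h' s y : ℝ} (hh' : HasDerivAt h h' y) (hs : s ≠ 0) :
    HasFDerivAt (G h) (dG h h' s y) (s, y) := by
  have hcomp : HasFDerivAt (fun q : ℝ × ℝ => h q.2) (h' • snd ℝ ℝ ℝ) (s, y) :=
    hh'.comp_hasFDerivAt (s, y) hasFDerivAt_snd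
  have hinv : HasFDerivAt (fun q : ℝ × ℝ => q.1⁻¹) (-(s ^ 2)⁻¹ • fst ℝ ℝ ℝ) (s, y) :=
    (hasDerivAt_inv hs).comp_hasFDerivAt (s, y) hasFDerivAt_fst
  have hG := (hasFDerivAt_snd.add (hcomp.mul hinv)).prodMk
    ((hasFDerivAt_snd.mul hasFDerivAt_fst).add hcomp)
  unfold G
  simp only [div_eq_mul_inv]
  refine hG.congr_fderiv (ext fun ⟨u, w⟩ => ?_)
  simp only [smul_smul, mul_neg, neg_smul, prod_apply, add_apply, coe_snd', neg_apply,
    smul_apply, coe_fst', smul_eq_mul, dG, Matrix.toLin_finTwoProd_toContinuousLinearMap,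
    neg_mul, Prod.ext_iff]
  constructor <;> field_simp <;> ring

theorem det_dG (h' : ℝ) {s : ℝ} (hs : s ≠ 0) (y : ℝ) :
    LinearMap.det (dG h h' s y : ℝ × ℝ →ₗ[ℝ] ℝ × ℝ) =
      -((s + h') / s) * (y + h y / s) := by
  rw [dG, LinearMap.coe_toContinuousLinearMap, LinearMap.det_toLin, Matrix.det_fin_two_of]
  field_simp
  ring

end RatioCoordinates

end

open RatioCoordinates in
theorem stmt_18_general
    (O : Set (ℝ × ℝ)) (hO : O ⊆ Set.Ioi (0 : ℝ) ×ˢ Set.Ioi (0 : ℝ))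
    (O3 : Set ℝ) (hO3open : IsOpen O3) (hO3conn : IsConnected O3)
    (hO3 : O3 ⊆ Set.Ioi (0 : ℝ))
    (h : ℝ → ℝ) (hhC1 : ContDiffOn ℝ 1 h O3) (hh : ∀ y ∈ O3, 0 < h y)
    (hsurj : (fun p : ℝ × ℝ × ℝ => (p.2.2 + h p.2.2 * p.1 / p.2.1,
        p.2.2 * p.2.1 / p.1 + h p.2.2)) ''
        {p : ℝ × ℝ × ℝ | (p.1, p.2.1) ∈ O ∧ p.2.2 ∈ O3} = O)
    (hL : ∀ s ∈ {s : ℝ | ∃ p ∈ O, s = p.2 / p.1}, ∀ y ∈ O3, s + deriv h y ≠ 0) :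
    Set.InjOn (fun q : ℝ × ℝ => (q.2 + h q.2 / q.1, q.2 * q.1 + h q.2))
      ({s : ℝ | ∃ p ∈ O, s = p.2 / p.1} ×ˢ O3) ∧
    (fun q : ℝ × ℝ => (q.2 + h q.2 / q.1, q.2 * q.1 + h q.2)) ''
      ({s : ℝ | ∃ p ∈ O, s = p.2 / p.1} ×ˢ O3) = O ∧
    ContDiffOn ℝ 1 (fun q : ℝ × ℝ => (q.2 + h q.2 / q.1, q.2 * q.1 + h q.2))
      ({s : ℝ | ∃ p ∈ O, s = p.2 / p.1} ×ˢ O3) ∧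
    ∀ q ∈ ({s : ℝ | ∃ p ∈ O, s = p.2 / p.1} ×ˢ O3),
      ∃ f : ℝ × ℝ →L[ℝ] ℝ × ℝ,
        HasFDerivAt (fun q : ℝ × ℝ => (q.2 + h q.2 / q.1, q.2 * q.1 + h q.2)) f q ∧
        LinearMap.det (f : ℝ × ℝ →ₗ[ℝ] ℝ × ℝ) ≠ 0 ∧
        LinearMap.det (f : ℝ × ℝ →ₗ[ℝ] ℝ × ℝ)
          = -((q.1 + deriv h q.2) / q.1) * (q.2 + h q.2 / q.1) := by
  have hQpos : ∀ s ∈ Q O, 0 < s := fun s => pos_of_mem_Q hO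
  have hderiv : ∀ y ∈ O3, HasDerivAt h (deriv h y) y := fun y hy =>
    ((hhC1.differentiableOn one_ne_zero y hy).differentiableAt (hO3open.mem_nhds hy)).hasDerivAt
  have hO3convex : Convex ℝ O3 := hO3conn.isPreconnected.ordConnected.convex
  refine ⟨injOn_G hQpos hO3convex hO3 hh hderiv hL, (image_G_eq_image_T O hO O3).trans hsurj,
    contDiffOn_G (fun s hs => (hQpos s hs).ne') hhC1, ?_⟩
  rintro ⟨s, y⟩ ⟨hs, hy⟩
  have hs0 : s ≠ 0 := (hQpos s hs).ne'
  refine ⟨dG h (deriv h y) s y, hasFDerivAt_G (hderiv y hy) hs0, ?_, det_dG _ hs0 y⟩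
  rw [det_dG _ hs0, neg_mul, neg_ne_zero]
  exact mul_ne_zero (div_ne_zero (hL s hs y hy) hs0)
    (add_pos (hO3 hy) (div_pos (hh y hy) (hQpos s hs))).ne'

/-- if `O` is open, `O3` is open and connected, `h` is `C¹` and
positive on `O3`, `(T1,T2)` maps `O × O3` onto `O`, and `L(s,y) = s + h'(y)` does
not vanish on `Q(O) × O3`, then `G(s,y) = (y + h(y)/s, y·s + h(y))` is a
`C¹`-diffeomorphism from `Q(O) × O3` onto `O` with Jacobian determinant
`det DG(s,y) = -(L(s,y)/s)·(y + h(y)/s)`. -/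
theorem stmt_18
    (O : Set (ℝ × ℝ)) (hOopen : IsOpen O) (hO : O ⊆ Set.Ioi (0 : ℝ) ×ˢ Set.Ioi (0 : ℝ))
    (O3 : Set ℝ) (hO3open : IsOpen O3) (hO3conn : IsConnected O3)
    (hO3 : O3 ⊆ Set.Ioi (0 : ℝ))
    (h : ℝ → ℝ) (hhC1 : ContDiffOn ℝ 1 h O3) (hh : ∀ y ∈ O3, 0 < h y)
    (hsurj : (fun p : ℝ × ℝ × ℝ => (p.2.2 + h p.2.2 * p.1 / p.2.1,
        p.2.2 * p.2.1 / p.1 + h p.2.2)) ''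
        {p : ℝ × ℝ × ℝ | (p.1, p.2.1) ∈ O ∧ p.2.2 ∈ O3} = O)
    (hL : ∀ s ∈ {s : ℝ | ∃ p ∈ O, s = p.2 / p.1}, ∀ y ∈ O3, s + deriv h y ≠ 0) :
    Set.InjOn (fun q : ℝ × ℝ => (q.2 + h q.2 / q.1, q.2 * q.1 + h q.2))
      ({s : ℝ | ∃ p ∈ O, s = p.2 / p.1} ×ˢ O3) ∧
    (fun q : ℝ × ℝ => (q.2 + h q.2 / q.1, q.2 * q.1 + h q.2)) ''
      ({s : ℝ | ∃ p ∈ O, s = p.2 / p.1} ×ˢ O3) = O ∧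
    ContDiffOn ℝ 1 (fun q : ℝ × ℝ => (q.2 + h q.2 / q.1, q.2 * q.1 + h q.2))
      ({s : ℝ | ∃ p ∈ O, s = p.2 / p.1} ×ˢ O3) ∧
    ∀ q ∈ ({s : ℝ | ∃ p ∈ O, s = p.2 / p.1} ×ˢ O3),
      ∃ f : ℝ × ℝ →L[ℝ] ℝ × ℝ,
        HasFDerivAt (fun q : ℝ × ℝ => (q.2 + h q.2 / q.1, q.2 * q.1 + h q.2)) f q ∧
        LinearMap.det (f : ℝ × ℝ →ₗ[ℝ] ℝ × ℝ) ≠ 0 ∧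
        LinearMap.det (f : ℝ × ℝ →ₗ[ℝ] ℝ × ℝ)
          = -((q.1 + deriv h q.2) / q.1) * (q.2 + h q.2 / q.1) :=
  stmt_18_general O hO O3 hO3open hO3conn hO3 h hhC1 hh hsurj hL
end
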